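/- In the SVRG setup, assume additionally that every component function f_{i,j} is μ-strongly convex with 0 < μ ≤ L, let x⋆ be the (unique) minimizer of f := (1/n)∑_{i=1}^n f_i, and for s ∈ S set ȳ(s) := (1/n)∑_{i=1}^n v_{i,s_i}. If 0 < α ≤ μ/(8L²), then (1/|S|)∑_{s∈S} ‖x̄ − αȳ(s) − x⋆‖² ≤ (1 − μα/2)‖x̄ − x⋆‖² + (3L²α/(2μn))∑_{i=1}^n ‖x_i − x̄‖² + (4L²α²/n²)∑_{i=1}^n ‖x⁰_i − x̄⁰‖² + (4L²α²/n)‖x̄⁰ − x⋆‖². -/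

import Mathlib

/-!
Write `ḡ := (1/n) ∑ᵢ ∇fᵢ(xᵢ)`. Then `ȳ(s) = ḡ + (1/n) ∑ᵢ zᵢ(sᵢ)`, where the SVRG noise
`zᵢ(j) = vᵢⱼ - ∇fᵢ(xᵢ)` has mean zero at every node. The sample indices being independent,
the expected squared distance splits as `‖x̄ - x⋆ - α ḡ‖²` plus the sum of the node variances
`(α/n)² 𝔼ⱼ ‖zᵢ(j)‖²`.

For the first term, the descent lemma at `xᵢ` towards `x̄` and strong convexity at `xᵢ` towards
`x⋆` give `⟪ḡ, x̄ - x⋆⟫ ≥ F x̄ - F x⋆ + μ/2 ‖x̄ - x⋆‖² - L/(2n) ∑ᵢ ‖xᵢ - x̄‖²`, while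
`‖ḡ‖² ≤ 4‖∇F x̄‖² + 4/3 ‖ḡ - ∇F x̄‖²` with `‖∇F x̄‖² ≤ 2L (F x̄ - F x⋆)` and `‖ḡ - ∇F x̄‖²`
bounded by the consensus error. For the second, the SVRG variance at node `i` is at most `L² ‖xᵢ - x⁰ᵢ‖²`, and
`xᵢ - x⁰ᵢ` is split through `x̄`, `x⋆` and `x̄⁰`. The step size condition gives `8Lα ≤ 1` and
`8μα ≤ 1`, which lets the terms of first order in `α`, together with
`F x̄ - F x⋆ ≥ μ/2 ‖x̄ - x⋆‖²`, absorb those of order `α²`.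
-/

open RealInnerProductSpace Finset
open scoped BigOperators

variable {H : Type*} [NormedAddCommGroup H] [InnerProductSpace ℝ H]

lemma norm_sum_sq_le_card_mul {E ι : Type*} [SeminormedAddCommGroup E] [Fintype ι] (u : ι → E) :
    ‖∑ i, u i‖ ^ 2 ≤ Fintype.card ι * ∑ i, ‖u i‖ ^ 2 :=
  calc ‖∑ i, u i‖ ^ 2 ≤ (∑ i, ‖u i‖) ^ 2 := by gcongr; exact norm_sum_le _ _
    _ ≤ _ := by simpa using sq_sum_le_card_mul_sum_sq (s := univ) (f := fun i => ‖u i‖)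

lemma norm_add_add_add_sq_le {E : Type*} [SeminormedAddCommGroup E] (a b c d : E) :
    ‖a + b + c + d‖ ^ 2 ≤ 8 / 3 * ‖a‖ ^ 2 + 8 * ‖b‖ ^ 2 + 4 * ‖c‖ ^ 2 + 4 * ‖d‖ ^ 2 := by
  have := pow_le_pow_left₀ (norm_nonneg _) (norm_add₄_le (a := a) (b := b) (c := c) (d := d)) 2
  -- Cauchy–Schwarz with weights `3/8, 1/8, 1/4, 1/4`
  nlinarith [sq_nonneg (8 / 3 * ‖a‖ - 8 * ‖b‖), sq_nonneg (8 / 3 * ‖a‖ - 4 * ‖c‖),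
    sq_nonneg (8 / 3 * ‖a‖ - 4 * ‖d‖), sq_nonneg (8 * ‖b‖ - 4 * ‖c‖),
    sq_nonneg (8 * ‖b‖ - 4 * ‖d‖), sq_nonneg (4 * ‖c‖ - 4 * ‖d‖)]

lemma sum_norm_sub_sq_le {E : Type*} [SeminormedAddCommGroup E] {n : ℕ} (x x0 : Fin n → E)
    (xbar xbar0 c : E) :
    ∑ i, ‖x i - x0 i‖ ^ 2 ≤ 8 / 3 * ∑ i, ‖x i - xbar‖ ^ 2 + 8 * n * ‖xbar - c‖ ^ 2 +
      4 * n * ‖xbar0 - c‖ ^ 2 + 4 * ∑ i, ‖x0 i - xbar0‖ ^ 2 :=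
  calc ∑ i, ‖x i - x0 i‖ ^ 2
      ≤ ∑ i, (8 / 3 * ‖x i - xbar‖ ^ 2 + 8 * ‖xbar - c‖ ^ 2 + 4 * ‖xbar0 - c‖ ^ 2
          + 4 * ‖x0 i - xbar0‖ ^ 2) := by
        gcongr with i
        have := norm_add_add_add_sq_le (x i - xbar) (xbar - c) (c - xbar0) (xbar0 - x0 i)
        rwa [norm_sub_rev c xbar0, norm_sub_rev xbar0 (x0 i), sub_add_sub_cancel,
          sub_add_sub_cancel, sub_add_sub_cancel] at this
    _ = _ := by
        simp only [sum_add_distrib, ← mul_sum, sum_const, card_univ, Fintype.card_fin,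
          nsmul_eq_mul]
        ring

lemma norm_sq_le_four_mul_add {E : Type*} [SeminormedAddCommGroup E] (a b : E) :
    ‖a‖ ^ 2 ≤ 4 * ‖b‖ ^ 2 + 4 / 3 * ‖a - b‖ ^ 2 := by
  have := norm_le_norm_add_norm_sub' a b
  nlinarith [sq_nonneg (3 * ‖b‖ - ‖a - b‖), norm_nonneg a, norm_nonneg (a - b)]

lemma expect_norm_sq_sub_le_of_sum_eq {ι : Type*} [Fintype ι] (w : ι → H) (c : H)
    (hw : ∑ j, w j = (Fintype.card ι : ℝ) • c) :
    𝔼 j, ‖w j - c‖ ^ 2 ≤ 𝔼 j, ‖w j‖ ^ 2 := by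
  have hvar : ∑ j, ‖w j - c‖ ^ 2 = ∑ j, ‖w j‖ ^ 2 - Fintype.card ι * ‖c‖ ^ 2 := by
    simp_rw [norm_sub_sq_real]
    rw [sum_add_distrib, sum_sub_distrib, ← mul_sum, ← sum_inner, hw, real_inner_smul_left,
      real_inner_self_eq_norm_sq, sum_const, card_univ, nsmul_eq_mul]
    ring
  simp only [Fintype.expect_eq_sum_div_card, hvar]
  gcongr
  exact sub_le_self _ (by positivity)

section Sampling

variable {ι : Type*} [Fintype ι] [DecidableEq ι] {κ : ι → Type*} [∀ i, Fintype (κ i)]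

lemma expect_pi_eq_expect_expect_piSplitAt (i : ι) (ψ : (∀ k, κ k) → ℝ) :
    𝔼 s, ψ s =
      𝔼 r : (∀ j : {j // j ≠ i}, κ j), 𝔼 a, ψ ((Equiv.piSplitAt i κ).symm (a, r)) := by
  rw [Fintype.expect_equiv (Equiv.piSplitAt i κ) ψ (fun p => ψ ((Equiv.piSplitAt i κ).symm p))
    (fun s => by rw [Equiv.symm_apply_apply]), ← univ_product_univ, expect_product, expect_comm]

lemma expect_pi_apply [∀ i, Nonempty (κ i)] (i : ι) (φ : κ i → ℝ) :
    𝔼 s : (∀ k, κ k), φ (s i) = 𝔼 a, φ a := by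
  rw [expect_pi_eq_expect_expect_piSplitAt i]
  simp [Equiv.piSplitAt_symm_apply]

lemma expect_pi_inner_eq_zero {i k : ι} (hik : i ≠ k) (z : κ i → H) (w : κ k → H)
    (hz : ∑ a, z a = 0) : 𝔼 s : (∀ k, κ k), ⟪z (s i), w (s k)⟫ = 0 := by
  rw [expect_pi_eq_expect_expect_piSplitAt i]
  refine Finset.expect_eq_zero fun r _ => ?_
  simp only [Equiv.piSplitAt_symm_apply, dif_pos, dif_neg hik.symm]
  rw [Fintype.expect_eq_sum_div_card, ← sum_inner, hz, inner_zero_left, zero_div]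

theorem expect_pi_norm_sq_sub_sum [∀ i, Nonempty (κ i)] (a : H) (z : ∀ i, κ i → H)
    (hz : ∀ i, ∑ j, z i j = 0) :
    𝔼 s : (∀ k, κ k), ‖a - ∑ i, z i (s i)‖ ^ 2 = ‖a‖ ^ 2 + ∑ i, 𝔼 j, ‖z i j‖ ^ 2 := by
  have hexpand : ∀ s : (∀ k, κ k), ‖a - ∑ i, z i (s i)‖ ^ 2 =
      ‖a‖ ^ 2 - 2 * ∑ i, ⟪a, z i (s i)⟫ + ∑ i, ∑ k, ⟪z i (s i), z k (s k)⟫ := by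
    intro s
    rw [norm_sub_sq_real, ← real_inner_self_eq_norm_sq (∑ i, _), inner_sum, sum_inner]
    simp_rw [inner_sum]
  have hmean : ∀ i, 𝔼 s : (∀ k, κ k), ⟪a, z i (s i)⟫ = 0 := fun i => by
    rw [expect_pi_apply i (fun j => ⟪a, z i j⟫), Fintype.expect_eq_sum_div_card, ← inner_sum,
      hz, inner_zero_right, zero_div]
  have hcross : ∀ i, 𝔼 s : (∀ k, κ k), ∑ k, ⟪z i (s i), z k (s k)⟫ = 𝔼 j, ‖z i j‖ ^ 2 :=
    fun i => by
      rw [expect_sum_comm, sum_eq_single i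
        (fun k _ hki => expect_pi_inner_eq_zero (Ne.symm hki) _ _ (hz i)) (by simp)]
      simp_rw [real_inner_self_eq_norm_sq]
      exact expect_pi_apply i fun j => ‖z i j‖ ^ 2
  simp_rw [hexpand]
  rw [expect_add_distrib, expect_sub_distrib, Fintype.expect_const, ← mul_expect, expect_sum_comm,
    expect_sum_comm]
  simp [hmean, hcross]

end Sampling

variable [CompleteSpace H]

def LipschitzGradient (h : H → ℝ) (L : ℝ) : Prop :=
  ∀ a b, ‖gradient h a - gradient h b‖ ≤ L * ‖a - b‖

def StrongConvexFirstOrder (h : H → ℝ) (μ : ℝ) : Prop :=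
  ∀ a b, h b ≥ h a + ⟪gradient h a, b - a⟫ + μ / 2 * ‖a - b‖ ^ 2

noncomputable def average {N : ℕ} (g : Fin N → H → ℝ) : H → ℝ :=
  fun z => (1 / (N : ℝ)) * ∑ j, g j z

section Smooth

variable {h : H → ℝ} {L μ : ℝ}

lemma hasDerivAt_comp_add_smul (hd : Differentiable ℝ h) (x v : H) (t : ℝ) :
    HasDerivAt (fun t : ℝ => h (x + t • v)) ⟪gradient h (x + t • v), v⟫ t := by
  have hline : HasDerivAt (fun t : ℝ => x + t • v) v t := by
    simpa using ((hasDerivAt_id t).smul_const v).const_add x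
  rw [inner_gradient_left]
  exact (hd _).hasFDerivAt.comp_hasDerivAt t hline

theorem LipschitzGradient.le_add_inner_add_sq (hd : Differentiable ℝ h)
    (hL : LipschitzGradient h L) (x y : H) :
    h y ≤ h x + ⟪gradient h x, y - x⟫ + L / 2 * ‖y - x‖ ^ 2 := by
  set v := y - x
  -- `φ` is antitone on `[0, ∞)`, since `φ' t = ⟪∇h (x + t v) - ∇h x, v⟫ - L t ‖v‖² ≤ 0`.
  let φ : ℝ → ℝ := fun t => h (x + t • v) - t * ⟪gradient h x, v⟫ - L / 2 * t ^ 2 * ‖v‖ ^ 2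
  have hφ : ∀ t, HasDerivAt φ
      (⟪gradient h (x + t • v), v⟫ - ⟪gradient h x, v⟫ - L * t * ‖v‖ ^ 2) t := by
    intro t
    have := ((hasDerivAt_comp_add_smul hd x v t).sub
      ((hasDerivAt_id' t).mul_const ⟪gradient h x, v⟫)).sub
      (((hasDerivAt_pow 2 t).const_mul (L / 2)).mul_const (‖v‖ ^ 2))
    refine this.congr_deriv ?_
    ring
  have hanti : AntitoneOn φ (Set.Ici 0) := by
    refine antitoneOn_of_hasDerivWithinAt_nonpos (convex_Ici 0)
      (fun t _ => (hφ t).continuousAt.continuousWithinAt) (fun t _ => (hφ t).hasDerivWithinAt)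
      fun t ht => ?_
    rw [interior_Ici, Set.mem_Ioi] at ht
    have := calc ⟪gradient h (x + t • v) - gradient h x, v⟫
        ≤ ‖gradient h (x + t • v) - gradient h x‖ * ‖v‖ := real_inner_le_norm _ _
      _ ≤ L * ‖x + t • v - x‖ * ‖v‖ := by gcongr; exact hL _ _
      _ = L * t * ‖v‖ ^ 2 := by
        rw [add_sub_cancel_left, norm_smul, Real.norm_of_nonneg ht.le]; ring
    rw [inner_sub_left] at this
    linarith
  have := hanti Set.self_mem_Ici (Set.mem_Ici.mpr zero_le_one) zero_le_one
  simp only [φ, one_smul, zero_smul, add_zero, v, add_sub_cancel] at this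
  linarith

theorem LipschitzGradient.norm_gradient_sq_le (hd : Differentiable ℝ h)
    (hL : LipschitzGradient h L) (hL0 : 0 < L) {c : H} (hmin : ∀ z, h c ≤ h z) (x : H) :
    ‖gradient h x‖ ^ 2 ≤ 2 * L * (h x - h c) := by
  have hstep := hL.le_add_inner_add_sq hd x (x - L⁻¹ • gradient h x)
  rw [sub_sub_cancel_left, norm_neg, inner_neg_right, inner_smul_right,
    real_inner_self_eq_norm_sq, norm_smul, Real.norm_of_nonneg (inv_nonneg.mpr hL0.le)] at hstep
  have hsq : L / 2 * (L⁻¹ * ‖gradient h x‖) ^ 2 = L⁻¹ * ‖gradient h x‖ ^ 2 / 2 := by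
    field_simp
  have hdecr : L⁻¹ * ‖gradient h x‖ ^ 2 ≤ 2 * (h x - h c) := by
    linarith [hmin (x - L⁻¹ • gradient h x)]
  calc ‖gradient h x‖ ^ 2 = L * (L⁻¹ * ‖gradient h x‖ ^ 2) := by field_simp
    _ ≤ 2 * L * (h x - h c) := by nlinarith

theorem StrongConvexFirstOrder.sq_norm_sub_le (hμ : StrongConvexFirstOrder h μ) {c : H}
    (hmin : ∀ z, h c ≤ h z) (x : H) :
    μ / 2 * ‖x - c‖ ^ 2 ≤ h x - h c := by
  have hc : gradient h c = 0 := by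
    simp [gradient, IsLocalMin.fderiv_eq_zero (Filter.Eventually.of_forall hmin)]
  have := hμ c x
  rw [hc, inner_zero_left, norm_sub_rev] at this
  linarith

theorem inner_gradient_sub_ge (hd : Differentiable ℝ h) (hL : LipschitzGradient h L)
    (hμ : StrongConvexFirstOrder h μ) (a b c : H) :
    h b - h c + μ / 2 * ‖a - c‖ ^ 2 - L / 2 * ‖a - b‖ ^ 2 ≤ ⟪gradient h a, b - c⟫ := by
  have hb := hL.le_add_inner_add_sq hd a b
  have hc := hμ a c
  rw [norm_sub_rev b a] at hb
  have : ⟪gradient h a, b - c⟫ = ⟪gradient h a, b - a⟫ - ⟪gradient h a, c - a⟫ := by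
    rw [← inner_sub_right, sub_sub_sub_cancel_right]
  linarith

end Smooth

section Average

variable {N : ℕ} {g : Fin N → H → ℝ} {L μ : ℝ}

lemma hasGradientAt_average {x : H} (hg : ∀ j, DifferentiableAt ℝ (g j) x) :
    HasGradientAt (average g) ((1 / (N : ℝ)) • ∑ j, gradient (g j) x) x := by
  rw [hasGradientAt_iff_hasFDerivAt, map_smul, map_sum]
  exact (HasFDerivAt.fun_sum fun j _ =>
    hasGradientAt_iff_hasFDerivAt.mp (hg j).hasGradientAt).const_mul _

lemma differentiable_average (hg : ∀ j, Differentiable ℝ (g j)) :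
    Differentiable ℝ (average g) := fun x =>
  (hasGradientAt_average fun j => (hg j x)).differentiableAt

lemma gradient_average (hg : ∀ j, Differentiable ℝ (g j)) (x : H) :
    gradient (average g) x = (1 / (N : ℝ)) • ∑ j, gradient (g j) x :=
  (hasGradientAt_average fun j => hg j x).gradient

lemma sum_gradient_eq_smul_gradient_average (hN : 0 < N) (hg : ∀ j, Differentiable ℝ (g j))
    (x : H) : ∑ j, gradient (g j) x = (N : ℝ) • gradient (average g) x := by
  rw [gradient_average hg, smul_smul, mul_one_div_cancel (by positivity), one_smul]

lemma lipschitzGradient_average (hN : 0 < N) (hg : ∀ j, Differentiable ℝ (g j))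
    (hL : ∀ j, LipschitzGradient (g j) L) : LipschitzGradient (average g) L := by
  intro a b
  rw [gradient_average hg, gradient_average hg, ← smul_sub, ← sum_sub_distrib, norm_smul,
    Real.norm_of_nonneg (by positivity)]
  calc 1 / (N : ℝ) * ‖∑ j, (gradient (g j) a - gradient (g j) b)‖
      ≤ 1 / (N : ℝ) * ∑ _j : Fin N, L * ‖a - b‖ := by
        gcongr
        exact (norm_sum_le _ _).trans (sum_le_sum fun j _ => hL j a b)
    _ = L * ‖a - b‖ := by
        rw [sum_const, card_univ, Fintype.card_fin, nsmul_eq_mul]; field_simp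

lemma strongConvexFirstOrder_average (hN : 0 < N) (hg : ∀ j, Differentiable ℝ (g j))
    (hμ : ∀ j, StrongConvexFirstOrder (g j) μ) : StrongConvexFirstOrder (average g) μ := by
  intro a b
  have hsum := sum_le_sum fun j (_ : j ∈ univ) => hμ j a b
  rw [sum_add_distrib, sum_add_distrib, ← sum_inner, sum_const, card_univ, Fintype.card_fin,
    nsmul_eq_mul, sum_gradient_eq_smul_gradient_average hN hg, real_inner_smul_left] at hsum
  calc average g a + ⟪gradient (average g) a, b - a⟫ + μ / 2 * ‖a - b‖ ^ 2
      = 1 / (N : ℝ) * (∑ j, g j a + N * ⟪gradient (average g) a, b - a⟫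
          + N * (μ / 2 * ‖a - b‖ ^ 2)) := by
        simp only [average]; field_simp
    _ ≤ average g b := by simp only [average]; gcongr

end Average

lemma eight_mul_mul_le_one {L μ α : ℝ} (hμ0 : 0 < μ) (hμL : μ ≤ L) (hα : 8 * L ^ 2 * α ≤ μ) :
    8 * L * α ≤ 1 :=
  le_of_mul_le_mul_right (by nlinarith) (hμ0.trans_le hμL)

section Svrg

variable {L : ℝ} {N : ℕ} {g : Fin N → H → ℝ}

lemma sum_svrg_gradient_sub_eq_zero (hN : 0 < N) (hg : ∀ j, Differentiable ℝ (g j)) (x y : H) :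
    ∑ j, (gradient (g j) x - gradient (g j) y + gradient (average g) y
      - gradient (average g) x) = 0 := by
  simp only [sum_sub_distrib, sum_add_distrib, sum_const, card_univ, Fintype.card_fin,
    sum_gradient_eq_smul_gradient_average hN hg, ← Nat.cast_smul_eq_nsmul ℝ]
  abel

theorem expect_norm_sq_svrg_gradient_sub_le (hN : 0 < N) (hg : ∀ j, Differentiable ℝ (g j))
    (hL : ∀ j, LipschitzGradient (g j) L) (x y : H) :
    𝔼 j, ‖gradient (g j) x - gradient (g j) y + gradient (average g) y
      - gradient (average g) x‖ ^ 2 ≤ L ^ 2 * ‖x - y‖ ^ 2 := by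
  have hmean : ∑ j, (gradient (g j) x - gradient (g j) y) =
      (Fintype.card (Fin N) : ℝ) • (gradient (average g) x - gradient (average g) y) := by
    rw [sum_sub_distrib, sum_gradient_eq_smul_gradient_average hN hg,
      sum_gradient_eq_smul_gradient_average hN hg, Fintype.card_fin, smul_sub]
  calc 𝔼 j, ‖gradient (g j) x - gradient (g j) y + gradient (average g) y
        - gradient (average g) x‖ ^ 2
      = 𝔼 j, ‖(gradient (g j) x - gradient (g j) y)
          - (gradient (average g) x - gradient (average g) y)‖ ^ 2 := by
        congr! 3; abel
    _ ≤ 𝔼 j, ‖gradient (g j) x - gradient (g j) y‖ ^ 2 :=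
        expect_norm_sq_sub_le_of_sum_eq _ _ hmean
    _ ≤ 𝔼 _j : Fin N, L ^ 2 * ‖x - y‖ ^ 2 := by
        simp only [Fintype.expect_eq_sum_div_card]
        gcongr with j
        rw [← mul_pow]
        gcongr
        exact hL j x y
    _ = L ^ 2 * ‖x - y‖ ^ 2 := by
        have : Nonempty (Fin N) := ⟨⟨0, hN⟩⟩
        exact Fintype.expect_const _

theorem sum_expect_norm_sq_svrg_noise_le {n : ℕ} (hn : 0 < n) {m : Fin n → ℕ}
    (hm : ∀ i, 0 < m i) {f : (i : Fin n) → Fin (m i) → H → ℝ}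
    (hd : ∀ i j, Differentiable ℝ (f i j)) {L μ : ℝ} (hL : ∀ i j, LipschitzGradient (f i j) L)
    (hμ0 : 0 < μ) (hμL : μ ≤ L) {α : ℝ} (hα0 : 0 < α) (hα : 8 * L ^ 2 * α ≤ μ)
    (x x0 : Fin n → H) (xbar xbar0 c : H) :
    ∑ i, 𝔼 j, ‖(α / n) • (gradient (f i j) (x i) - gradient (f i j) (x0 i)
        + gradient (average (f i)) (x0 i) - gradient (average (f i)) (x i))‖ ^ 2 ≤
      μ * α * ‖xbar - c‖ ^ 2 + 1 / 3 * (L ^ 2 * α / (μ * n) * ∑ i, ‖x i - xbar‖ ^ 2) +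
        4 * L ^ 2 * α ^ 2 / n ^ 2 * ∑ i, ‖x0 i - xbar0‖ ^ 2 +
        4 * L ^ 2 * α ^ 2 / n * ‖xbar0 - c‖ ^ 2 := by
  have hn' : (1 : ℝ) ≤ n := by exact_mod_cast hn
  set S := ∑ i, ‖x i - xbar‖ ^ 2
  set S0 := ∑ i, ‖x0 i - xbar0‖ ^ 2
  set D := ‖xbar - c‖ ^ 2
  set Q := ‖xbar0 - c‖ ^ 2
  calc ∑ i, 𝔼 j, ‖(α / n) • (gradient (f i j) (x i) - gradient (f i j) (x0 i)
        + gradient (average (f i)) (x0 i) - gradient (average (f i)) (x i))‖ ^ 2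
      = (α / n) ^ 2 * ∑ i, 𝔼 j, ‖gradient (f i j) (x i) - gradient (f i j) (x0 i)
        + gradient (average (f i)) (x0 i) - gradient (average (f i)) (x i)‖ ^ 2 := by
        simp_rw [norm_smul, mul_pow, ← mul_expect, ← mul_sum, Real.norm_of_nonneg
          (by positivity : 0 ≤ α / n)]
    _ ≤ (α / n) ^ 2 * ∑ i, L ^ 2 * ‖x i - x0 i‖ ^ 2 := by
        gcongr with i
        exact expect_norm_sq_svrg_gradient_sub_le (hm i) (hd i) (hL i) (x i) (x0 i)
    _ ≤ (α / n) ^ 2 * (L ^ 2 * (8 / 3 * S + 8 * n * D + 4 * n * Q + 4 * S0)) := by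
        rw [← mul_sum]
        gcongr
        exact sum_norm_sub_sq_le x x0 xbar xbar0 c
    _ = (α / n) ^ 2 * (L ^ 2 * (8 * n * D)) + (α / n) ^ 2 * (L ^ 2 * (8 / 3 * S)) +
          4 * L ^ 2 * α ^ 2 / n ^ 2 * S0 + 4 * L ^ 2 * α ^ 2 / n * Q := by
        field_simp; ring
    _ ≤ μ * α * D + 1 / 3 * (L ^ 2 * α / (μ * n) * S) +
          4 * L ^ 2 * α ^ 2 / n ^ 2 * S0 + 4 * L ^ 2 * α ^ 2 / n * Q := by
        have hμα : 8 * μ * α ≤ 1 := by nlinarith [eight_mul_mul_le_one hμ0 hμL hα]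
        gcongr ?_ + ?_ + _ + _
        · calc (α / n) ^ 2 * (L ^ 2 * (8 * n * D)) = 8 * L ^ 2 * α / n * (α * D) := by field_simp
            _ ≤ μ * (α * D) := by
                gcongr
                exact (div_le_self (by positivity) hn').trans hα
            _ = μ * α * D := by ring
        · calc (α / n) ^ 2 * (L ^ 2 * (8 / 3 * S))
              = 8 * μ * α / n * (1 / 3 * (L ^ 2 * α / (μ * n) * S)) := by field_simp
            _ ≤ 1 / 3 * (L ^ 2 * α / (μ * n) * S) :=
                mul_le_of_le_one_left (by positivity)
                  ((div_le_one (by positivity)).mpr (hμα.trans hn'))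

end Svrg

section Deterministic

variable {L μ : ℝ} {n : ℕ} {fi : Fin n → H → ℝ}

theorem inner_average_gradient_ge (hn : 0 < n) (hd : ∀ i, Differentiable ℝ (fi i))
    (hL : ∀ i, LipschitzGradient (fi i) L) (hμ : ∀ i, StrongConvexFirstOrder (fi i) μ)
    (hμ0 : 0 ≤ μ) {x : Fin n → H} {xbar : H} (hxbar : xbar = (1 / (n : ℝ)) • ∑ i, x i) (c : H) :
    average fi xbar - average fi c + μ / 2 * ‖xbar - c‖ ^ 2
        - L / (2 * n) * ∑ i, ‖x i - xbar‖ ^ 2 ≤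
      ⟪(1 / (n : ℝ)) • ∑ i, gradient (fi i) (x i), xbar - c⟫ := by
  have hn' : (0 : ℝ) < n := by positivity
  have hsumx : ∑ i, (x i - c) = (n : ℝ) • (xbar - c) := by
    rw [sum_sub_distrib, hxbar, smul_sub, smul_smul, mul_one_div_cancel hn'.ne', one_smul,
      sum_const, card_univ, Fintype.card_fin, Nat.cast_smul_eq_nsmul]
  have hjensen : (n : ℝ) * ‖xbar - c‖ ^ 2 ≤ ∑ i, ‖x i - c‖ ^ 2 := by
    have := norm_sum_sq_le_card_mul fun i => x i - c
    rw [hsumx, norm_smul, Real.norm_of_nonneg hn'.le, Fintype.card_fin] at this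
    nlinarith
  have hsum := sum_le_sum fun i (_ : i ∈ univ) =>
    inner_gradient_sub_ge (hd i) (hL i) (hμ i) (x i) xbar c
  rw [sum_sub_distrib, sum_add_distrib, sum_sub_distrib, ← mul_sum, ← mul_sum,
    ← sum_inner] at hsum
  rw [real_inner_smul_left]
  simp only [average]
  field_simp
  nlinarith [mul_le_mul_of_nonneg_left hjensen hμ0]

theorem norm_average_gradient_sub_sq_le (hn : 0 < n) (hd : ∀ i, Differentiable ℝ (fi i))
    (hL : ∀ i, LipschitzGradient (fi i) L) (x : Fin n → H) (y : H) :
    ‖(1 / (n : ℝ)) • ∑ i, gradient (fi i) (x i) - gradient (average fi) y‖ ^ 2 ≤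
      L ^ 2 / n * ∑ i, ‖x i - y‖ ^ 2 := by
  have hn' : (0 : ℝ) < n := by positivity
  rw [gradient_average hd, ← smul_sub, ← sum_sub_distrib, norm_smul,
    Real.norm_of_nonneg (by positivity), mul_pow]
  calc (1 / (n : ℝ)) ^ 2 * ‖∑ i, (gradient (fi i) (x i) - gradient (fi i) y)‖ ^ 2
      ≤ (1 / (n : ℝ)) ^ 2 * (n * ∑ i, ‖gradient (fi i) (x i) - gradient (fi i) y‖ ^ 2) := by
        gcongr
        simpa using norm_sum_sq_le_card_mul fun i => gradient (fi i) (x i) - gradient (fi i) y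
    _ ≤ (1 / (n : ℝ)) ^ 2 * (n * ∑ i, L ^ 2 * ‖x i - y‖ ^ 2) := by
        gcongr with i
        rw [← mul_pow]
        gcongr
        exact hL i _ _
    _ = L ^ 2 / n * ∑ i, ‖x i - y‖ ^ 2 := by
        rw [← mul_sum]; field_simp

theorem norm_sub_smul_average_gradient_sq_le (hn : 0 < n) (hd : ∀ i, Differentiable ℝ (fi i))
    (hL : ∀ i, LipschitzGradient (fi i) L) (hμ : ∀ i, StrongConvexFirstOrder (fi i) μ)
    (hμ0 : 0 < μ) (hμL : μ ≤ L) {α : ℝ} (hα0 : 0 < α) (hα : 8 * L ^ 2 * α ≤ μ) {c : H}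
    (hmin : ∀ z, average fi c ≤ average fi z) {x : Fin n → H} {xbar : H}
    (hxbar : xbar = (1 / (n : ℝ)) • ∑ i, x i) :
    ‖xbar - c - α • ((1 / (n : ℝ)) • ∑ i, gradient (fi i) (x i))‖ ^ 2 ≤
      (1 - 3 * μ * α / 2) * ‖xbar - c‖ ^ 2 +
        7 / 6 * (L ^ 2 * α / (μ * n) * ∑ i, ‖x i - xbar‖ ^ 2) := by
  set gbar := (1 / (n : ℝ)) • ∑ i, gradient (fi i) (x i)
  set G := gradient (average fi) xbar
  set gap := average fi xbar - average fi c
  set D := ‖xbar - c‖ ^ 2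
  set S := ∑ i, ‖x i - xbar‖ ^ 2
  have hL0 : 0 < L := hμ0.trans_le hμL
  have hinner : gap + μ / 2 * D - L / (2 * n) * S ≤ ⟪gbar, xbar - c⟫ :=
    inner_average_gradient_ge hn hd hL hμ hμ0.le hxbar c
  have hgrad : ‖G‖ ^ 2 ≤ 2 * L * gap :=
    (lipschitzGradient_average hn hd hL).norm_gradient_sq_le (differentiable_average hd) hL0
      hmin xbar
  have hdev : ‖gbar - G‖ ^ 2 ≤ L ^ 2 / n * S := norm_average_gradient_sub_sq_le hn hd hL x xbar
  have hgap : μ / 2 * D ≤ gap := (strongConvexFirstOrder_average hn hd hμ).sq_norm_sub_le hmin xbar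
  have hgbar := norm_sq_le_four_mul_add gbar G
  have hLα := eight_mul_mul_le_one hμ0 hμL hα
  have hμα : 8 * μ * α ≤ 1 := by nlinarith
  have hS : 0 ≤ S := by positivity
  have hcoef₁ : 2 * (α * (L / (2 * n) * S)) ≤ L ^ 2 * α / (μ * n) * S := by
    have : L ^ 2 * α / (μ * n) * S = L / μ * (2 * (α * (L / (2 * n) * S))) := by
      field_simp
    rw [this]
    exact le_mul_of_one_le_left (by positivity) ((one_le_div hμ0).mpr hμL)
  have hcoef₂ : α ^ 2 * (4 / 3 * (L ^ 2 / n * S)) ≤ 1 / 6 * (L ^ 2 * α / (μ * n) * S) := by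
    have : α ^ 2 * (4 / 3 * (L ^ 2 / n * S)) = 8 * μ * α * (1 / 6 * (L ^ 2 * α / (μ * n) * S)) := by
      field_simp; ring
    rw [this]
    exact mul_le_of_le_one_left (by positivity) hμα
  rw [norm_sub_sq_real, inner_smul_right, norm_smul, Real.norm_of_nonneg hα0.le, mul_pow,
    real_inner_comm]
  have hgbar' : ‖gbar‖ ^ 2 ≤ 8 * L * gap + 4 / 3 * (L ^ 2 / n * S) := by linarith
  have hgap' : α ^ 2 * (8 * L * gap) ≤ α * gap := by
    have : α ^ 2 * (8 * L * gap) = 8 * L * α * (α * gap) := by ring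
    rw [this]
    exact mul_le_of_le_one_left (mul_nonneg hα0.le (by nlinarith)) hLα
  linarith [mul_le_mul_of_nonneg_left hinner hα0.le, mul_le_mul_of_nonneg_left hgap hα0.le,
    mul_le_mul_of_nonneg_left hgbar' (sq_nonneg α)]

end Deterministic

theorem svrg_optimality_gap_bound {n p : ℕ} (hn : 0 < n)
    (m : Fin n → ℕ) (hm : ∀ i, 0 < m i) (μ L : ℝ)
    (hμ : 0 < μ) (hμL : μ ≤ L)
    (f : (i : Fin n) → Fin (m i) → EuclideanSpace ℝ (Fin p) → ℝ)
    (hdiff : ∀ i j, Differentiable ℝ (f i j))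
    (hsmooth : ∀ i j x y, ‖gradient (f i j) x - gradient (f i j) y‖ ≤ L * ‖x - y‖)
    (hsc : ∀ i j x y,
      f i j y ≥ f i j x + ⟪gradient (f i j) x, y - x⟫ + μ / 2 * ‖x - y‖ ^ 2)
    (x x0 : Fin n → EuclideanSpace ℝ (Fin p))
    (α : ℝ) (hα0 : 0 < α) (hα : α ≤ μ / (8 * L ^ 2))
    (xstar : EuclideanSpace ℝ (Fin p)) :
    let fi : Fin n → EuclideanSpace ℝ (Fin p) → ℝ :=
      fun i z => (1 / (m i : ℝ)) * ∑ j, f i j z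
    let F : EuclideanSpace ℝ (Fin p) → ℝ := fun z => (1 / (n : ℝ)) * ∑ i, fi i z
    let v : (i : Fin n) → Fin (m i) → EuclideanSpace ℝ (Fin p) :=
      fun i j => gradient (f i j) (x i) - gradient (f i j) (x0 i) +
        gradient (fi i) (x0 i)
    let xbar : EuclideanSpace ℝ (Fin p) := (1 / (n : ℝ)) • ∑ i, x i
    let xbar0 : EuclideanSpace ℝ (Fin p) := (1 / (n : ℝ)) • ∑ i, x0 i
    let ybar : ((i : Fin n) → Fin (m i)) → EuclideanSpace ℝ (Fin p) :=
      fun s => (1 / (n : ℝ)) • ∑ i, v i (s i)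
    (∀ z, F xstar ≤ F z) →
      (1 / (Fintype.card ((i : Fin n) → Fin (m i)) : ℝ)) *
          ∑ s : (i : Fin n) → Fin (m i), ‖xbar - α • ybar s - xstar‖ ^ 2 ≤
        (1 - μ * α / 2) * ‖xbar - xstar‖ ^ 2 +
          (3 * L ^ 2 * α / (2 * μ * (n : ℝ))) * ∑ i, ‖x i - xbar‖ ^ 2 +
          (4 * L ^ 2 * α ^ 2 / (n : ℝ) ^ 2) * ∑ i, ‖x0 i - xbar0‖ ^ 2 +
          (4 * L ^ 2 * α ^ 2 / (n : ℝ)) * ‖xbar0 - xstar‖ ^ 2 := by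
  intro fi F v xbar xbar0 ybar hmin
  have : ∀ i, Nonempty (Fin (m i)) := fun i => ⟨⟨0, hm i⟩⟩
  have hfi_diff (i) : Differentiable ℝ (fi i) := differentiable_average (hdiff i)
  have hfi_smooth (i) : LipschitzGradient (fi i) L :=
    lipschitzGradient_average (hm i) (hdiff i) (hsmooth i)
  have hfi_sc (i) : StrongConvexFirstOrder (fi i) μ :=
    strongConvexFirstOrder_average (hm i) (hdiff i) (hsc i)
  have h8 : 8 * L ^ 2 * α ≤ μ := by
    rwa [le_div_iff₀ (by nlinarith), mul_comm] at hα
  set gbar := (1 / (n : ℝ)) • ∑ i, gradient (fi i) (x i)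
  let z (i : Fin n) (j : Fin (m i)) := (α / n) • (v i j - gradient (fi i) (x i))
  have hz (i) : ∑ j, z i j = 0 := by
    have hcentred : ∑ j, (v i j - gradient (fi i) (x i)) = 0 :=
      sum_svrg_gradient_sub_eq_zero (hm i) (hdiff i) (x i) (x0 i)
    rw [← smul_sum, hcentred, smul_zero]
  have hstep (s : (i : Fin n) → Fin (m i)) :
      xbar - α • ybar s - xstar = (xbar - xstar - α • gbar) - ∑ i, z i (s i) := by
    simp only [ybar, gbar, z, ← smul_sum, sum_sub_distrib, smul_sub, smul_smul, mul_one_div]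
    abel
  have hdet := norm_sub_smul_average_gradient_sq_le hn hfi_diff hfi_smooth hfi_sc hμ hμL hα0 h8
    hmin (rfl : xbar = _)
  have hnoise := sum_expect_norm_sq_svrg_noise_le hn hm hdiff hsmooth hμ hμL hα0 h8 x x0 xbar
    xbar0 xstar
  calc (1 / (Fintype.card ((i : Fin n) → Fin (m i)) : ℝ)) *
        ∑ s : (i : Fin n) → Fin (m i), ‖xbar - α • ybar s - xstar‖ ^ 2
      = ‖xbar - xstar - α • gbar‖ ^ 2 + ∑ i, 𝔼 j, ‖z i j‖ ^ 2 := by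
        rw [one_div_mul_eq_div, ← Fintype.expect_eq_sum_div_card]
        simp_rw [hstep]
        exact expect_pi_norm_sq_sub_sum _ z hz
    _ ≤ _ + _ := add_le_add hdet hnoise
    _ = _ := by ring
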